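/- arXiv:1108.2932 — 3 statements merged into one kernel-verified Lean document; each statement's English description precedes it below -/
import Mathlib

section
/- Let F be a field of characteristic 2. An element x of sl(2, F) is split semisimple if and only if x is a scalar multiple of the identity matrix. That is, {x ∈ sl(2,F) : ⨆_{μ∈F} ker(ad x − μ·id) = sl(2,F)} = F·1. (Note that the identity matrix has trace 2 = 0, so it lies in sl(2,F) when char F = 2.) -/
/-!
For `x ∈ sl(2, F)` Cayley–Hamilton gives `x * x = - det x • 1`, and in characteristic `2` one has
`⁅x, ⁅x, y⁆⁆ = ⁅x * x, y⁆`, so `(ad x)² = 0`. A nilpotent endomorphism has no nonzero eigenvalue,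
so its eigenvectors span only if it vanishes. Finally `ad x = 0` means that `x` commutes with the
off-diagonal matrix units, which lie in `sl(2, F)`, so `x` is scalar.
-/

/-- An element `h` of a Lie algebra `L` over `F` is *split semisimple* if `L` is spanned by
eigenvectors of `ad h`, i.e. the supremum of the eigenspaces `ker (ad h - μ • id)` over all
`μ ∈ F` is the whole of `L`. -/
def IsSplitSemisimple (F : Type*) [Field F] (L : Type*) [LieRing L] [LieAlgebra F L]
    (h : L) : Prop :=
  (⨆ μ : F, LinearMap.ker (LieAlgebra.ad F L h - μ • (1 : Module.End F L))) = ⊤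

namespace Module.End

variable {K V : Type*} [Field K] [AddCommGroup V] [Module K V]

lemma eigenspace_eq_bot_of_isNilpotent {f : End K V} (hf : IsNilpotent f) {μ : K} (hμ : μ ≠ 0) :
    f.eigenspace μ = ⊥ := by
  by_contra h
  exact hμ (HasEigenvalue.isNilpotent_of_isNilpotent hf h).eq_zero

lemma eq_zero_of_isNilpotent_of_iSup_eigenspace_eq_top {f : End K V} (hf : IsNilpotent f)
    (htop : ⨆ μ, f.eigenspace μ = ⊤) : f = 0 := by
  refine LinearMap.ker_eq_top.mp (top_le_iff.mp (htop ▸ iSup_le fun μ ↦ ?_))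
  rcases eq_or_ne μ 0 with rfl | hμ
  · rw [eigenspace_zero]
  · rw [eigenspace_eq_bot_of_isNilpotent hf hμ]
    exact bot_le

end Module.End

section IsSplitSemisimple

variable {F L : Type*} [Field F] [LieRing L] [LieAlgebra F L] {h : L}

open LieAlgebra

lemma isSplitSemisimple_iff_iSup_eigenspace_eq_top :
    IsSplitSemisimple F L h ↔ ⨆ μ, (ad F L h).eigenspace μ = ⊤ := by
  simp only [IsSplitSemisimple, Module.End.eigenspace_def]

lemma isSplitSemisimple_iff_ad_eq_zero_of_isNilpotent (hn : IsNilpotent (ad F L h)) :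
    IsSplitSemisimple F L h ↔ ad F L h = 0 := by
  rw [isSplitSemisimple_iff_iSup_eigenspace_eq_top]
  refine ⟨Module.End.eq_zero_of_isNilpotent_of_iSup_eigenspace_eq_top hn, fun h0 ↦ ?_⟩
  refine top_unique (le_iSup_of_le 0 ?_)
  rw [Module.End.eigenspace_zero, h0, LinearMap.ker_zero]

end IsSplitSemisimple

lemma CharTwo.lie_lie_self {A : Type*} [Ring A] [CharP A 2] (x y : A) :
    ⁅x, ⁅x, y⁆⁆ = ⁅x * x, y⁆ :=
  calc ⁅x, ⁅x, y⁆⁆ = x * x * y + y * (x * x) - (x * y * x + x * y * x) := by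
        simp only [Ring.lie_def]; noncomm_ring
    _ = ⁅x * x, y⁆ := by
        rw [CharTwo.add_self_eq_zero, sub_zero, ← CharTwo.sub_eq_add, Ring.lie_def, mul_assoc]

namespace Matrix

attribute [local instance 100] LieRing.ofAssociativeRing

variable {R : Type*} [CommRing R]

lemma mul_self_fin_two (M : Matrix (Fin 2) (Fin 2) R) :
    M * M = M.trace • M - M.det • 1 := by
  ext i j
  fin_cases i <;> fin_cases j <;>
    simp only [Fin.zero_eta, Fin.mk_one, Fin.isValue, mul_apply, Fin.sum_univ_two, trace_fin_two,
      det_fin_two, sub_apply, smul_apply, smul_eq_mul, one_apply_eq, one_apply_ne zero_ne_one,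
      one_apply_ne one_ne_zero] <;> ring

lemma lie_lie_eq_zero_of_trace_eq_zero_fin_two [CharP R 2] {M : Matrix (Fin 2) (Fin 2) R}
    (hM : M.trace = 0) (N : Matrix (Fin 2) (Fin 2) R) : ⁅M, ⁅M, N⁆⁆ = 0 := by
  rw [CharTwo.lie_lie_self, mul_self_fin_two, hM, zero_smul, zero_sub, neg_lie, smul_lie,
    (Commute.one_left N).lie_eq, smul_zero, neg_zero]

end Matrix

namespace LieAlgebra.SpecialLinear

attribute [local instance 100] LieRing.ofAssociativeRing

variable {n R : Type*} [DecidableEq n] [Fintype n] [CommRing R]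

lemma ad_eq_zero_iff_mem_range_scalar (x : sl n R) :
    ad R (sl n R) x = 0 ↔ (x : Matrix n n R) ∈ Set.range (Matrix.scalar n) := by
  constructor
  · refine fun h0 ↦ Matrix.mem_range_scalar_of_commute_single fun i j hij ↦ ?_
    have := congr_arg Subtype.val (LinearMap.congr_fun h0 (single i j hij 1))
    rw [ad_apply, LieSubalgebra.coe_bracket, val_single] at this
    exact (commute_iff_lie_eq.mpr this).symm
  · rintro ⟨c, hc⟩
    ext y : 1
    apply Subtype.ext
    rw [ad_apply, LieSubalgebra.coe_bracket, ← hc]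
    exact (Matrix.scalar_commute c (fun _ ↦ Commute.all _ _) (y : Matrix n n R)).lie_eq

lemma ad_sq_eq_zero_of_charTwo [CharP R 2] (x : sl (Fin 2) R) : ad R (sl (Fin 2) R) x ^ 2 = 0 := by
  ext y : 1
  apply Subtype.ext
  simp only [pow_two, Module.End.mul_apply, ad_apply, LieSubalgebra.coe_bracket]
  exact Matrix.lie_lie_eq_zero_of_trace_eq_zero_fin_two x.2 y

end LieAlgebra.SpecialLinear

open LieAlgebra.SpecialLinear in
/-- Over a field of characteristic `2`, an element of `sl(2, F)` is split semisimple if and only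
if it is a scalar multiple of the identity matrix. -/
theorem isSplitSemisimple_sl2_iff_scalar (F : Type*) [Field F] [CharP F 2] :
    {x : ↥(sl (Fin 2) F) | IsSplitSemisimple F ↥(sl (Fin 2) F) x} =
      {x : ↥(sl (Fin 2) F) | ∃ c : F, (x : Matrix (Fin 2) (Fin 2) F) = c • (1 : Matrix (Fin 2) (Fin 2) F)} := by
  ext x
  rw [Set.mem_ofPred_eq, isSplitSemisimple_iff_ad_eq_zero_of_isNilpotent
    ⟨2, ad_sq_eq_zero_of_charTwo x⟩, ad_eq_zero_iff_mem_range_scalar]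
  simp [Matrix.smul_one_eq_diagonal, eq_comm]
end

section
/- Let F be a field of characteristic 2. There is no element x ∈ sl(2, F) whose centralizer C(x) = {y ∈ sl(2,F) : [x,y] = 0} is an abelian Lie subalgebra consisting of split semisimple elements that is maximal (with respect to inclusion) among all such subalgebras. In other words, the Lie algebra of type A1^SC over a field of characteristic 2 has no regular split semisimple elements. -/
theorem Module.End.iSup_eigenspace_le_ker_of_isNilpotent {K V : Type*} [Field K]
    [AddCommGroup V] [Module K V] {f : End K V} (hf : IsNilpotent f) :
    ⨆ μ, f.eigenspace μ ≤ LinearMap.ker f := by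
  refine iSup_le fun μ => ?_
  rcases eq_or_ne μ 0 with rfl | hμ
  · rw [eigenspace_zero]
  · have hbot : f.eigenspace μ = ⊥ := by
      by_contra hne
      exact hμ ((hasEigenvalue_iff.mpr hne).isNilpotent_of_isNilpotent hf).eq_zero
    simp [hbot]

theorem IsSplitSemisimple.lie_eq_zero_of_isNilpotent {F L : Type*} [Field F] [LieRing L]
    [LieAlgebra F L] {h : L} (hh : IsSplitSemisimple F L h)
    (hn : IsNilpotent (LieAlgebra.ad F L h)) (y : L) : ⁅h, y⁆ = 0 := by
  have hker : LinearMap.ker (LieAlgebra.ad F L h) = ⊤ := by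
    refine top_le_iff.mp (hh ▸ ?_)
    simpa only [Module.End.eigenspace_def] using
      Module.End.iSup_eigenspace_le_ker_of_isNilpotent hn
  simpa using (hker ▸ Submodule.mem_top : y ∈ LinearMap.ker (LieAlgebra.ad F L h))

theorem Matrix.mul_self_eq_neg_det_smul_one_of_trace_eq_zero {R : Type*} [CommRing R]
    {M : Matrix (Fin 2) (Fin 2) R} (hM : M.trace = 0) : M * M = -M.det • 1 := by
  rw [trace_fin_two] at hM
  ext i j
  fin_cases i <;> fin_cases j <;> simp [Matrix.mul_apply, det_fin_two]
  · linear_combination M 0 0 * hM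
  · linear_combination M 0 1 * hM
  · linear_combination M 1 0 * hM
  · linear_combination M 1 1 * hM

namespace LieAlgebra.SpecialLinear

theorem sl_fin_two_lie_lie_eq_zero {R : Type*} [CommRing R] [CharP R 2]
    (x y : sl (Fin 2) R) : ⁅x, ⁅x, y⁆⁆ = 0 := by
  ext1
  obtain ⟨c, hc⟩ : ∃ c : R, x.val * x.val = c • 1 :=
    ⟨_, Matrix.mul_self_eq_neg_det_smul_one_of_trace_eq_zero x.2⟩
  simp only [sl_bracket, ZeroMemClass.coe_zero]
  generalize x.val = X, y.val = Y at hc ⊢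
  calc X * (X * Y - Y * X) - (X * Y - Y * X) * X
      = X * X * Y + Y * (X * X) - 2 * (X * Y * X) := by noncomm_ring
    _ = 2 * (c • Y - X * Y * X) := by
        rw [hc, smul_mul_assoc, mul_smul_comm, one_mul, mul_one]; noncomm_ring
    _ = 0 := mul_eq_zero_of_left CharTwo.two_eq_zero _

theorem sl_fin_two_isNilpotent_ad {R : Type*} [CommRing R] [CharP R 2] (x : sl (Fin 2) R) :
    IsNilpotent (LieAlgebra.ad R _ x) :=
  ⟨2, LinearMap.ext fun y => by simp [pow_two, sl_fin_two_lie_lie_eq_zero]⟩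

end LieAlgebra.SpecialLinear

open LieAlgebra.SpecialLinear in
/-- Over a field of characteristic `2`, there is no element `x` of `sl(2, F)` whose centralizer
`{y : ⁅x, y⁆ = 0}` is a maximal split toral subalgebra, i.e. an abelian Lie subalgebra consisting
of split semisimple elements that is maximal with respect to inclusion among all such
subalgebras.  In other words, `sl(2, F)` has no regular split semisimple elements. -/
theorem sl2_char_two_no_regular_split_semisimple (F : Type*) [Field F] [CharP F 2] :
    ¬ ∃ (x : ↥(sl (Fin 2) F)) (H : LieSubalgebra F ↥(sl (Fin 2) F)),
        (↑H : Set ↥(sl (Fin 2) F)) = {y : ↥(sl (Fin 2) F) | ⁅x, y⁆ = 0} ∧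
        IsLieAbelian ↥H ∧
        (∀ z : ↥(sl (Fin 2) F), z ∈ H → IsSplitSemisimple F ↥(sl (Fin 2) F) z) ∧
        (∀ H' : LieSubalgebra F ↥(sl (Fin 2) F),
            IsLieAbelian ↥H' →
            (∀ z : ↥(sl (Fin 2) F), z ∈ H' → IsSplitSemisimple F ↥(sl (Fin 2) F) z) →
            H ≤ H' → H' = H) := by
  rintro ⟨x, H, hH, hab, hss, -⟩
  have hmem (y : sl (Fin 2) F) : y ∈ H ↔ ⁅x, y⁆ = 0 := Set.ext_iff.mp hH y
  have hx_central : ∀ y : sl (Fin 2) F, ⁅x, y⁆ = 0 :=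
    (hss x ((hmem x).mpr (lie_self x))).lie_eq_zero_of_isNilpotent (sl_fin_two_isNilpotent_ad x)
  obtain rfl : H = ⊤ := eq_top_iff.mpr fun y _ => (hmem y).mpr (hx_central y)
  exact sl_non_abelian (Fin 2) F (by simp)
    ((lie_abelian_iff_equiv_lie_abelian LieSubalgebra.topEquiv).mp hab)
end

section
/- Let F be a field of characteristic 2. Then the Lie algebra sl(2, F) is not isomorphic to the quotient Lie algebra gl(2, F)/Z, where Z = F·1 is the central ideal of scalar matrices. (These are the Chevalley Lie algebras of type A1^SC and A1^ad, respectively, which are isomorphic in every characteristic except 2.) -/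
/-!
In characteristic `2` the identity matrix has trace `2 = 0`, so it is a nonzero central element
of `sl(2, F)`. On the other hand `gl(2, F) / Z` has trivial centre: a matrix whose commutator with
every matrix is scalar is itself scalar. Lie algebra isomorphisms preserve (triviality of) centres.
-/

attribute [local instance 100] LieRing.ofAssociativeRing

/-- The scalar matrices `F · 1` form a central ideal `Z` of `gl(2, F)`. -/
def scalarIdeal (F : Type*) [Field F] : LieIdeal F (Matrix (Fin 2) (Fin 2) F) :=
  { Submodule.span F {(1 : Matrix (Fin 2) (Fin 2) F)} with
    lie_mem := by
      intro x m hm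
      have hm' : m ∈ Submodule.span F {(1 : Matrix (Fin 2) (Fin 2) F)} := hm
      obtain ⟨c, rfl⟩ := Submodule.mem_span_singleton.mp hm'
      show ⁅x, c • (1 : Matrix (Fin 2) (Fin 2) F)⁆ ∈
        Submodule.span F {(1 : Matrix (Fin 2) (Fin 2) F)}
      have h0 : ⁅x, c • (1 : Matrix (Fin 2) (Fin 2) F)⁆ = 0 := by
        simp [Ring.lie_def, Matrix.mul_smul, Matrix.smul_mul]
      rw [h0]
      exact Submodule.zero_mem _ }

section Center

variable {R L L' : Type*} [CommRing R] [LieRing L] [LieAlgebra R L] [LieRing L'] [LieAlgebra R L']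

theorem LieEquiv.map_mem_center (e : L ≃ₗ⁅R⁆ L') {x : L} (hx : x ∈ LieAlgebra.center R L) :
    e x ∈ LieAlgebra.center R L' := by
  rw [LieModule.mem_maxTrivSubmodule] at hx ⊢
  intro y
  obtain ⟨y, rfl⟩ := e.surjective y
  rw [← LieEquiv.coe_toLieHom, ← LieHom.map_lie, hx, map_zero]

theorem LieEquiv.center_eq_bot (e : L ≃ₗ⁅R⁆ L') (h : LieAlgebra.center R L' = ⊥) :
    LieAlgebra.center R L = ⊥ := by
  refine (LieSubmodule.eq_bot_iff _).mpr fun x hx => e.injective ?_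
  rw [map_zero, ← LieSubmodule.mem_bot (R := R) (L := L'), ← h]
  exact e.map_mem_center hx

end Center

namespace LieAlgebra.SpecialLinear

variable {n R : Type*} [Fintype n] [DecidableEq n] [CommRing R]

theorem one_mem_sl_iff : (1 : Matrix n n R) ∈ sl n R ↔ (Fintype.card n : R) = 0 := by
  change 1 ∈ LinearMap.ker (Matrix.traceLinearMap n R R) ↔ _
  rw [LinearMap.mem_ker, Matrix.traceLinearMap_apply, Matrix.trace_one]

theorem one_mem_center_sl (h : (1 : Matrix n n R) ∈ sl n R) :
    (⟨1, h⟩ : sl n R) ∈ center R (sl n R) := by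
  refine (LieModule.mem_maxTrivSubmodule _ _ _ _).mpr fun x => Subtype.ext ?_
  simp [Ring.lie_def]

theorem center_sl_ne_bot_of_card_eq_zero [Nonempty n] [Nontrivial R]
    (h : (Fintype.card n : R) = 0) : center R (sl n R) ≠ ⊥ := by
  have h₁ := one_mem_sl_iff.mpr h
  intro hbot
  have h₀ := (LieSubmodule.eq_bot_iff _).mp hbot _ (one_mem_center_sl h₁)
  exact one_ne_zero (congrArg Subtype.val h₀)

end LieAlgebra.SpecialLinear

section ScalarIdeal

variable {F : Type*} [Field F]

theorem mem_scalarIdeal_iff {m : Matrix (Fin 2) (Fin 2) F} :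
    m ∈ scalarIdeal F ↔ m 0 1 = 0 ∧ m 1 0 = 0 ∧ m 0 0 = m 1 1 := by
  change m ∈ Submodule.span F {1} ↔ _
  rw [Submodule.mem_span_singleton]
  constructor
  · rintro ⟨c, rfl⟩
    simp
  · rintro ⟨h₀₁, h₁₀, h₀₀⟩
    refine ⟨m 0 0, ?_⟩
    ext i j
    fin_cases i <;> fin_cases j <;> simp [h₀₁, h₁₀, h₀₀]

theorem mem_scalarIdeal_of_forall_lie_mem {m : Matrix (Fin 2) (Fin 2) F}
    (h : ∀ x : Matrix (Fin 2) (Fin 2) F, ⁅x, m⁆ ∈ scalarIdeal F) : m ∈ scalarIdeal F := by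
  -- commuting with `E₁₁` modulo scalars forces `m` diagonal, with `E₁₂` forces `m 0 0 = m 1 1`
  have h₁ := mem_scalarIdeal_iff.mp (h !![1, 0; 0, 0])
  have h₂ := mem_scalarIdeal_iff.mp (h !![0, 1; 0, 0])
  simp [Ring.lie_def, Matrix.mul_apply, Matrix.vecMul, dotProduct, Fin.sum_univ_two] at h₁ h₂
  exact mem_scalarIdeal_iff.mpr ⟨h₁.1, h₁.2, (sub_eq_zero.mp h₂.1).symm⟩

theorem center_quotient_scalarIdeal_eq_bot :
    LieAlgebra.center F (Matrix (Fin 2) (Fin 2) F ⧸ scalarIdeal F) = ⊥ := by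
  refine (LieSubmodule.eq_bot_iff _).mpr fun w hw => ?_
  obtain ⟨m, rfl⟩ := LieSubmodule.Quotient.surjective_mk' _ w
  rw [LieSubmodule.Quotient.mk_eq_zero]
  refine mem_scalarIdeal_of_forall_lie_mem fun x => ?_
  rw [← LieSubmodule.Quotient.mk_eq_zero, LieSubmodule.Quotient.mk'_apply,
    LieSubmodule.Quotient.mk_bracket]
  exact (LieModule.mem_maxTrivSubmodule _ _ _ _).mp hw _

end ScalarIdeal

open LieAlgebra.SpecialLinear in
/-- Over a field of characteristic `2`, the Lie algebra `sl(2, F)` is not isomorphic to the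
quotient Lie algebra `gl(2, F) / Z`, where `Z = F · 1` is the central ideal of scalar matrices.
(These are the Chevalley Lie algebras of types `A1^SC` and `A1^ad` respectively, which are
isomorphic in every characteristic except `2`.) -/
theorem sl2_not_iso_pgl2_char_two (F : Type*) [Field F] [CharP F 2] :
    IsEmpty (↥(sl (Fin 2) F) ≃ₗ⁅F⁆ (Matrix (Fin 2) (Fin 2) F ⧸ scalarIdeal F)) :=
  ⟨fun e => center_sl_ne_bot_of_card_eq_zero (by simpa using CharTwo.two_eq_zero)
    (e.center_eq_bot center_quotient_scalarIdeal_eq_bot)⟩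
end
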